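/- For every z ∈ ℂ, the function θ ↦ log|z − e^{iθ}| is integrable on [0, 2π] and (1/(2π))·∫₀^{2π} log|z − e^{iθ}| dθ = log|z| if |z| ≥ 1, and = 0 if |z| < 1. -/

import Mathlib

open Real MeasureTheory intervalIntegral

private lemma mean_value' (f : ℂ → ℂ)
    (hd : ∀ w ∈ Metric.closedBall (0:ℂ) 1, DifferentiableAt ℂ f w) :
    ∫ θ in (0:ℝ)..(2*π), (f (Complex.exp (θ * Complex.I))).re = 2 * π * (f 0).re := by
  have key := Complex.circleIntegral_sub_center_inv_smul_of_differentiable_on_off_countable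
    (R := 1) (c := 0) (f := f) one_pos (Set.countable_empty)
    (fun w hw => (hd w hw).continuousAt.continuousWithinAt)
    (fun w hw => hd w (Metric.ball_subset_closedBall hw.1))
  rw [circleIntegral] at key
  simp only [deriv_circleMap, circleMap, Complex.ofReal_one, one_mul, zero_add, sub_zero,
    smul_eq_mul] at key
  have h1 : ∀ θ : ℝ, Complex.exp (θ * Complex.I) * Complex.I *
      ((Complex.exp (θ * Complex.I))⁻¹ * f (Complex.exp (θ * Complex.I)))
      = Complex.I * f (Complex.exp (θ * Complex.I)) := by
    intro θ
    have : Complex.exp (θ * Complex.I) ≠ 0 := Complex.exp_ne_zero _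
    field_simp
  rw [intervalIntegral.integral_congr (fun θ _ => h1 θ),
    intervalIntegral.integral_const_mul] at key
  have key2 : (∫ θ in (0:ℝ)..(2*π), f (Complex.exp (θ * Complex.I))) = 2 * π * f 0 :=
    mul_left_cancel₀ Complex.I_ne_zero (by rw [key]; ring)
  have hint : IntervalIntegrable (fun θ : ℝ => f (Complex.exp (θ * Complex.I)))
      MeasureTheory.volume 0 (2*π) := by
    apply Continuous.intervalIntegrable
    have hc : Continuous fun θ : ℝ => Complex.exp (θ * Complex.I) := by continuity
    have hf : ContinuousOn f (Metric.closedBall (0:ℂ) 1) :=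
      fun w hw => (hd w hw).continuousAt.continuousWithinAt
    refine hf.comp_continuous hc fun θ => ?_
    simp [Metric.mem_closedBall, Complex.norm_exp]
  have := Complex.reCLM.intervalIntegral_comp_comm hint (a := 0) (b := 2*π)
  simp only [Complex.reCLM_apply] at this
  rw [this, key2]
  simp

private lemma logsin_int_half :
    IntervalIntegrable (fun x : ℝ => Real.log (Real.sin x)) volume 0 (π/2) := by
  have hg : IntervalIntegrable (fun x : ℝ => Real.log (π/2) + 2 * x ^ (-(1:ℝ)/2)) volume 0 (π/2) :=
    intervalIntegrable_const.add ((intervalIntegrable_rpow' (by norm_num)).const_mul 2)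
  refine hg.mono_fun ((Real.measurable_log.comp Real.continuous_sin.measurable).aestronglyMeasurable) ?_
  rw [Set.uIoc_of_le (by positivity)]
  refine (ae_restrict_iff' measurableSet_Ioc).2 (Filter.Eventually.of_forall fun x hx => ?_)
  obtain ⟨hx0, hx2⟩ := hx
  have hsinpos : 0 < Real.sin x := Real.sin_pos_of_pos_of_lt_pi hx0 (lt_of_le_of_lt hx2 (by linarith [pi_pos]))
  have hsin1 : Real.sin x ≤ 1 := Real.sin_le_one x
  have hlow : 2/π * x ≤ Real.sin x := Real.mul_le_sin hx0.le hx2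
  have hπ : 0 < π := pi_pos
  have hxr : (0:ℝ) < x ^ (-(1:ℝ)/2) := Real.rpow_pos_of_pos hx0 _
  have hlogle : Real.log (Real.sin x) ≤ 0 := Real.log_nonpos hsinpos.le hsin1
  have h1 : Real.log (2/π * x) ≤ Real.log (Real.sin x) :=
    Real.log_le_log (by positivity) hlow
  have h2 : Real.log (2/π * x) = Real.log (2/π) + Real.log x :=
    Real.log_mul (by positivity) hx0.ne'
  have h3 : Real.log (2/π) = - Real.log (π/2) := by
    rw [← Real.log_inv]; norm_num
  have h4 : - Real.log x ≤ 2 * x ^ (-(1:ℝ)/2) := by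
    have := Real.log_le_sub_one_of_pos hxr
    rw [Real.log_rpow hx0] at this
    nlinarith
  have hlogpi : 0 < Real.log (π/2) := Real.log_pos (by linarith [pi_gt_three])
  simp only [Real.norm_eq_abs]
  rw [abs_of_nonpos hlogle, abs_of_pos (by positivity)]
  nlinarith

private lemma logsin_int_pi :
    IntervalIntegrable (fun x : ℝ => Real.log (Real.sin x)) volume 0 π := by
  have h2 : IntervalIntegrable (fun x : ℝ => Real.log (Real.sin x)) volume (π/2) π := by
    have := (logsin_int_half.comp_sub_left π).symm
    simp only [Real.sin_pi_sub] at this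
    rw [show π - π/2 = π/2 by ring, show π - 0 = π by ring] at this
    exact this
  exact logsin_int_half.trans h2

private lemma logsin_int_half2 :
    IntervalIntegrable (fun x : ℝ => Real.log (Real.sin (x/2))) volume 0 (2*π) := by
  have := logsin_int_pi.comp_mul_right (c := 1/2) enorm_ne_top enorm_ne_top
  simp only [mul_one_div] at this
  rw [show (0:ℝ)/(1/2) = 0 by norm_num, show π/(1/2) = 2*π by ring] at this
  exact this

private lemma logsin_val : ∫ x in (0:ℝ)..π, Real.log (Real.sin x) = -(π * Real.log 2) := by
  have hπ : 0 < π := pi_pos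
  set A := ∫ x in (0:ℝ)..(π/2), Real.log (Real.sin x) with hA
  have hJ2 : ∫ x in (π/2:ℝ)..π, Real.log (Real.sin x) = A := by
    have h := intervalIntegral.integral_comp_sub_left (a := π/2) (b := π)
      (fun x => Real.log (Real.sin x)) π
    simp only [sub_self, sub_half] at h
    rw [hA, ← h]
    exact intervalIntegral.integral_congr fun x _ => by simp [Real.sin_pi_sub]
  have hint2 : IntervalIntegrable (fun x : ℝ => Real.log (Real.sin x)) volume (π/2) π :=
    logsin_int_pi.mono_set (by
      rw [Set.uIcc_of_le (by linarith), Set.uIcc_of_le (by linarith)]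
      exact Set.Icc_subset_Icc (by linarith) le_rfl)
  have hJ : ∫ x in (0:ℝ)..π, Real.log (Real.sin x) = 2 * A := by
    rw [← intervalIntegral.integral_add_adjacent_intervals logsin_int_half hint2, hJ2, ← hA]
    ring
  have int1 : IntervalIntegrable (fun x : ℝ => Real.log (Real.sin (x/2))) volume 0 π :=
    logsin_int_half2.mono_set (by
      rw [Set.uIcc_of_le (by linarith), Set.uIcc_of_le (by linarith)]
      exact Set.Icc_subset_Icc le_rfl (by linarith))
  have heq2 : (fun x : ℝ => Real.log (Real.sin ((π - x)/2))) = fun x : ℝ => Real.log (Real.cos (x/2)) :=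
    funext fun x => by rw [show (π - x)/2 = π/2 - x/2 by ring, Real.sin_pi_div_two_sub]
  have int2 : IntervalIntegrable (fun x : ℝ => Real.log (Real.cos (x/2))) volume 0 π := by
    have := (int1.comp_sub_left π).symm
    rw [show π - 0 = π by ring, sub_self] at this
    rwa [heq2] at this
  -- a.e. identity  log sin x = log 2 + log sin(x/2) + log cos(x/2) on (0, π)
  have hne : ∀ᵐ x : ℝ, x ≠ π := by
    rw [MeasureTheory.ae_iff]
    have : {x : ℝ | ¬ x ≠ π} = {π} := by ext x; simp
    rw [this]
    exact Real.volume_singleton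
  have hcongr : ∫ x in (0:ℝ)..π, Real.log (Real.sin x) =
      ∫ x in (0:ℝ)..π, (Real.log 2 + Real.log (Real.sin (x/2)) + Real.log (Real.cos (x/2))) := by
    refine intervalIntegral.integral_congr_ae ?_
    filter_upwards [hne] with x hxne hx
    rw [Set.uIoc_of_le hπ.le] at hx
    obtain ⟨hx0, hx2⟩ := hx
    have hxπ : x < π := lt_of_le_of_ne hx2 hxne
    have hs : 0 < Real.sin (x/2) := Real.sin_pos_of_pos_of_lt_pi (by linarith) (by linarith)
    have hc : 0 < Real.cos (x/2) := Real.cos_pos_of_mem_Ioo ⟨by linarith, by linarith⟩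
    have hsin : Real.sin x = 2 * Real.sin (x/2) * Real.cos (x/2) := by
      rw [show x = 2 * (x/2) by ring, Real.sin_two_mul]; ring_nf
    rw [hsin, Real.log_mul (by positivity) hc.ne', Real.log_mul (by positivity) hs.ne']
  have hval1 : ∫ x in (0:ℝ)..π, Real.log (Real.sin (x/2)) = 2 * A := by
    have := intervalIntegral.integral_comp_div (a := 0) (b := π)
      (fun x => Real.log (Real.sin x)) (two_ne_zero)
    rw [this]
    norm_num [hA]
  have hval2 : ∫ x in (0:ℝ)..π, Real.log (Real.cos (x/2)) = 2 * A := by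
    have h := intervalIntegral.integral_comp_sub_left (a := 0) (b := π)
      (fun x => Real.log (Real.sin (x/2))) π
    rw [show π - 0 = π by ring, sub_self] at h
    calc ∫ x in (0:ℝ)..π, Real.log (Real.cos (x/2))
        = ∫ x in (0:ℝ)..π, Real.log (Real.sin ((π - x)/2)) := by rw [heq2]
      _ = ∫ x in (0:ℝ)..π, Real.log (Real.sin (x/2)) := h
      _ = 2 * A := hval1
  have hsplit : ∫ x in (0:ℝ)..π, (Real.log 2 + Real.log (Real.sin (x/2)) + Real.log (Real.cos (x/2)))
      = π * Real.log 2 + 2 * A + 2 * A := by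
    rw [intervalIntegral.integral_add (intervalIntegrable_const.add int1) int2,
      intervalIntegral.integral_add intervalIntegrable_const int1,
      intervalIntegral.integral_const, hval1, hval2]
    simp [smul_eq_mul]
  have : 2 * A = π * Real.log 2 + 2 * A + 2 * A := hJ.symm.trans (hcongr.trans hsplit)
  rw [hJ]; linarith
private noncomputable def hfun (u : ℝ) : ℝ := Real.log (2 * |Real.sin (u/2)|)

private lemma hfun_periodic : Function.Periodic hfun (2*π) := by
  intro u
  unfold hfun
  rw [show (u + 2*π)/2 = u/2 + π by ring, Real.sin_antiperiodic (u/2)]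
  rw [abs_neg]

private lemma hfun_int : IntervalIntegrable hfun volume 0 (2*π) := by
  have hπ : 0 < π := pi_pos
  have hne : ∀ᵐ x : ℝ, x ≠ 2*π := by
    rw [MeasureTheory.ae_iff]
    have : {x : ℝ | ¬ x ≠ 2*π} = {2*π} := by ext x; simp
    rw [this]; exact Real.volume_singleton
  have hbase : IntervalIntegrable (fun u : ℝ => Real.log 2 + Real.log (Real.sin (u/2)))
      volume 0 (2*π) := intervalIntegrable_const.add logsin_int_half2
  refine hbase.congr_ae ?_
  rw [Set.uIoc_of_le (by linarith)]
  filter_upwards [ae_restrict_mem measurableSet_Ioc, ae_restrict_of_ae hne] with x hx hxne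
  obtain ⟨hx0, hx2⟩ := hx
  have hs : 0 < Real.sin (x/2) :=
    Real.sin_pos_of_pos_of_lt_pi (by linarith) (by cases lt_of_le_of_ne hx2 hxne |>.le.lt_or_eq <;> linarith [lt_of_le_of_ne hx2 hxne])
  unfold hfun
  rw [abs_of_pos hs, Real.log_mul two_ne_zero hs.ne']

private lemma hfun_val : ∫ u in (0:ℝ)..(2*π), hfun u = 0 := by
  have hπ : 0 < π := pi_pos
  have hne : ∀ᵐ x : ℝ, x ≠ 2*π := by
    rw [MeasureTheory.ae_iff]
    have : {x : ℝ | ¬ x ≠ 2*π} = {2*π} := by ext x; simp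
    rw [this]; exact Real.volume_singleton
  have hcongr : ∫ u in (0:ℝ)..(2*π), hfun u =
      ∫ u in (0:ℝ)..(2*π), (Real.log 2 + Real.log (Real.sin (u/2))) := by
    refine intervalIntegral.integral_congr_ae ?_
    filter_upwards [hne] with x hxne hx
    rw [Set.uIoc_of_le (by linarith)] at hx
    obtain ⟨hx0, hx2⟩ := hx
    have hxlt : x < 2*π := lt_of_le_of_ne hx2 hxne
    have hs : 0 < Real.sin (x/2) := Real.sin_pos_of_pos_of_lt_pi (by linarith) (by linarith)
    unfold hfun
    rw [abs_of_pos hs, Real.log_mul two_ne_zero hs.ne']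
  rw [hcongr, intervalIntegral.integral_add intervalIntegrable_const logsin_int_half2,
    intervalIntegral.integral_const]
  have h2 : ∫ u in (0:ℝ)..(2*π), Real.log (Real.sin (u/2)) = -(2*π*Real.log 2) := by
    have := intervalIntegral.integral_comp_div (a := 0) (b := 2*π)
      (fun x => Real.log (Real.sin x)) (two_ne_zero)
    rw [this, show (0:ℝ)/2 = 0 by norm_num, show (2*π)/2 = π by ring, logsin_val]
    simp
    ring
  rw [h2]
  simp

private lemma hfun_int_big : IntervalIntegrable hfun volume (-(2*π)) (2*π + 2*π) := by
  have hneg : IntervalIntegrable hfun volume (-(2*π)) 0 := by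
    have := hfun_int.comp_sub_right (-(2*π))
    rw [show (0:ℝ) + -(2*π) = -(2*π) by ring, show 2*π + -(2*π) = 0 by ring] at this
    have heq : (fun x : ℝ => hfun (x - -(2*π))) = hfun :=
      funext fun x => by rw [sub_neg_eq_add, hfun_periodic x]
    rwa [heq] at this
  have hpos : IntervalIntegrable hfun volume (2*π) (2*π + 2*π) := by
    have := hfun_int.comp_sub_right (2*π)
    rw [zero_add] at this
    have heq : (fun x : ℝ => hfun (x - 2*π)) = hfun :=
      funext fun x => by rw [hfun_periodic.sub_eq x]
    rwa [heq] at this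
  exact (hneg.trans hfun_int).trans hpos

private lemma abs_circle_eq (α θ : ℝ) :
    ‖Complex.exp (α * Complex.I) - Complex.exp (θ * Complex.I)‖
      = 2 * |Real.sin ((θ - α)/2)| := by
  have hsq : ‖Complex.exp (α * Complex.I) - Complex.exp (θ * Complex.I)‖ ^ 2
      = (2 * |Real.sin ((θ - α)/2)|) ^ 2 := by
    rw [Complex.sq_norm, Complex.normSq_apply]
    simp only [Complex.sub_re, Complex.sub_im, Complex.exp_ofReal_mul_I_re,
      Complex.exp_ofReal_mul_I_im]
    rw [mul_pow, sq_abs]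
    have hc : Real.cos (θ - α) = 1 - 2 * Real.sin ((θ - α)/2) ^ 2 := by
      have h := Real.cos_two_mul ((θ - α)/2)
      rw [show 2 * ((θ - α)/2) = θ - α by ring] at h
      have hs := Real.sin_sq_add_cos_sq ((θ - α)/2)
      linarith
    have hcs : Real.cos (θ - α) = Real.cos θ * Real.cos α + Real.sin θ * Real.sin α :=
      Real.cos_sub θ α
    have h1 := Real.sin_sq_add_cos_sq θ
    have h2 := Real.sin_sq_add_cos_sq α
    nlinarith
  have h1 : (0:ℝ) ≤ ‖Complex.exp (α * Complex.I) - Complex.exp (θ * Complex.I)‖ :=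
    norm_nonneg _
  have h2 : (0:ℝ) ≤ 2 * |Real.sin ((θ - α)/2)| := by positivity
  calc ‖Complex.exp (α * Complex.I) - Complex.exp (θ * Complex.I)‖
      = Real.sqrt (‖Complex.exp (α * Complex.I) - Complex.exp (θ * Complex.I)‖ ^ 2) :=
        (Real.sqrt_sq h1).symm
    _ = Real.sqrt ((2 * |Real.sin ((θ - α)/2)|) ^ 2) := by rw [hsq]
    _ = 2 * |Real.sin ((θ - α)/2)| := Real.sqrt_sq h2

/-- For every `z ∈ ℂ`, the function `θ ↦ log|z − e^{iθ}|` is integrable on `[0, 2π]` and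
`(1/(2π))·∫₀^{2π} log|z − e^{iθ}| dθ` equals `log|z|` if `|z| ≥ 1` and `0` if `|z| < 1`. -/
theorem integral_log_abs_sub_circle (z : ℂ) :
    IntervalIntegrable (fun θ : ℝ => Real.log (‖z - Complex.exp (θ * Complex.I)‖))
      MeasureTheory.volume 0 (2 * Real.pi) ∧
    (1 / (2 * Real.pi)) *
        ∫ θ in (0:ℝ)..(2 * Real.pi),
          Real.log (‖z - Complex.exp (θ * Complex.I)‖) =
      if 1 ≤ ‖z‖ then Real.log (‖z‖) else 0 := by
  have hπ : 0 < π := pi_pos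
  rcases lt_trichotomy (‖z‖) 1 with hlt | heq | hgt
  · -- |z| < 1
    set f : ℂ → ℂ := fun w => Complex.log (1 - (starRingEnd ℂ) z * w) with hf
    have hd : ∀ w ∈ Metric.closedBall (0:ℂ) 1, DifferentiableAt ℂ f w := by
      intro w hw
      rw [Metric.mem_closedBall, dist_zero_right] at hw
      have hre : 0 < (1 - (starRingEnd ℂ) z * w).re := by
        have h1 : ((starRingEnd ℂ) z * w).re ≤ ‖(starRingEnd ℂ) z * w‖ :=
          Complex.re_le_norm _
        have h2 : ‖(starRingEnd ℂ) z * w‖ ≤ ‖z‖ := by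
          rw [norm_mul, Complex.norm_conj]
          calc ‖z‖ * ‖w‖ ≤ ‖z‖ * 1 :=
            mul_le_mul_of_nonneg_left hw (norm_nonneg z)
          _ = ‖z‖ := mul_one _
        simp only [Complex.sub_re, Complex.one_re]
        linarith
      exact (Complex.differentiableAt_log (Complex.mem_slitPlane_iff.2 (Or.inl hre))).comp w
        ((differentiableAt_const _).sub ((differentiableAt_const _).mul differentiableAt_id))
    have hmean := mean_value' f hd
    have hf0 : (f 0).re = 0 := by simp [hf]
    have habs : ∀ θ : ℝ, ‖1 - (starRingEnd ℂ) z * Complex.exp (θ * Complex.I)‖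
        = ‖z - Complex.exp (θ * Complex.I)‖ := by
      intro θ
      set E := Complex.exp (θ * Complex.I) with hE
      have hconj : (starRingEnd ℂ) (1 - (starRingEnd ℂ) z * E)
          = 1 - z * Complex.exp (-θ * Complex.I) := by
        rw [map_sub, map_one, map_mul, Complex.conj_conj]
        congr 1
        rw [hE, ← Complex.exp_conj]
        congr 1
        simp [Complex.ext_iff]
      have hfact : (1 : ℂ) - z * Complex.exp (-θ * Complex.I)
          = (E - z) * Complex.exp (-θ * Complex.I) := by
        rw [sub_mul, hE, ← Complex.exp_add]
        norm_num
      rw [← Complex.norm_conj (1 - (starRingEnd ℂ) z * E), hconj, hfact, norm_mul]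
      rw [show (-θ : ℂ) * Complex.I = ((-θ : ℝ) : ℂ) * Complex.I by norm_num,
        Complex.norm_exp_ofReal_mul_I, mul_one, norm_sub_rev]
    have hre : ∀ θ : ℝ, (f (Complex.exp (θ * Complex.I))).re
        = Real.log (‖z - Complex.exp (θ * Complex.I)‖) := by
      intro θ
      rw [hf]
      simp only
      rw [Complex.log_re, habs θ]
    have hval : ∫ θ in (0:ℝ)..(2*π),
        Real.log (‖z - Complex.exp (θ * Complex.I)‖) = 0 := by
      rw [← intervalIntegral.integral_congr (fun θ _ => hre θ), hmean, hf0, mul_zero]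
    have hcont : Continuous fun θ : ℝ =>
        Real.log (‖z - Complex.exp (θ * Complex.I)‖) := by
      rw [continuous_iff_continuousAt]
      intro θ
      have hne : ‖z - Complex.exp (θ * Complex.I)‖ ≠ 0 := by
        rw [ne_eq, norm_eq_zero, sub_eq_zero]
        intro h
        rw [h] at hlt
        rw [show (θ:ℂ) * Complex.I = ((θ:ℝ):ℂ) * Complex.I by norm_num,
          Complex.norm_exp_ofReal_mul_I] at hlt
        linarith
      have hcabs : Continuous fun θ : ℝ => ‖z - Complex.exp (θ * Complex.I)‖ :=
        continuous_norm.comp (by continuity)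
      show ContinuousAt (Real.log ∘ fun θ : ℝ => ‖z - Complex.exp (θ * Complex.I)‖) θ
      exact ContinuousAt.comp (g := Real.log)
        (f := fun θ : ℝ => ‖z - Complex.exp (θ * Complex.I)‖) (x := θ)
        (Real.continuousAt_log hne) hcabs.continuousAt
    refine ⟨hcont.intervalIntegrable _ _, ?_⟩
    rw [hval, mul_zero, if_neg (by linarith)]
  · -- |z| = 1
    have hz0 : z ≠ 0 := by intro h; rw [h] at heq; simp at heq
    set α := Complex.arg z with hα
    have hz' : z = Complex.exp (α * Complex.I) := by
      have := Complex.norm_mul_exp_arg_mul_I z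
      rw [heq] at this
      simpa using this.symm
    have habs : ∀ θ : ℝ, ‖z - Complex.exp (θ * Complex.I)‖
        = 2 * |Real.sin ((θ - α)/2)| := by
      intro θ; rw [hz', abs_circle_eq]
    have hfun_eq : (fun θ : ℝ => Real.log (‖z - Complex.exp (θ * Complex.I)‖))
        = fun θ : ℝ => hfun (θ - α) := funext fun θ => by rw [habs θ]; rfl
    have hαlo : -π < α := Complex.neg_pi_lt_arg z
    have hαhi : α ≤ π := Complex.arg_le_pi z
    have hsub : IntervalIntegrable hfun volume (-α) (2*π - α) := by
      refine hfun_int_big.mono_set ?_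
      rw [Set.uIcc_of_le (by linarith), Set.uIcc_of_le (by linarith)]
      exact Set.Icc_subset_Icc (by linarith) (by linarith)
    have hint : IntervalIntegrable (fun θ : ℝ => hfun (θ - α)) volume 0 (2*π) := by
      have := hsub.comp_sub_right α
      rw [show -α + α = 0 by ring, show 2*π - α + α = 2*π by ring] at this
      exact this
    have hval : ∫ θ in (0:ℝ)..(2*π), hfun (θ - α) = 0 := by
      rw [intervalIntegral.integral_comp_sub_right (fun u => hfun u) α, zero_sub]
      have := hfun_periodic.intervalIntegral_add_eq (-α) 0
      rw [show -α + 2*π = 2*π - α by ring, zero_add] at this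
      rw [this, hfun_val]
    rw [hfun_eq]
    refine ⟨hint, ?_⟩
    rw [hval, mul_zero, if_pos (by linarith), heq, Real.log_one]
  · -- |z| > 1
    have hz0 : z ≠ 0 := by
      intro h; rw [h] at hgt; simp at hgt; linarith
    have habsne : ∀ θ : ℝ, ‖z - Complex.exp (θ * Complex.I)‖ ≠ 0 := by
      intro θ
      rw [ne_eq, norm_eq_zero, sub_eq_zero]
      intro h
      rw [h, show (θ:ℂ) * Complex.I = ((θ:ℝ):ℂ) * Complex.I by norm_num,
        Complex.norm_exp_ofReal_mul_I] at hgt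
      linarith
    set f : ℂ → ℂ := fun w => Complex.log (1 - w / z) with hf
    have hd : ∀ w ∈ Metric.closedBall (0:ℂ) 1, DifferentiableAt ℂ f w := by
      intro w hw
      rw [Metric.mem_closedBall, dist_zero_right] at hw
      have hre : 0 < (1 - w / z).re := by
        have h1 : (w / z).re ≤ ‖w / z‖ := Complex.re_le_norm _
        have h2 : ‖w / z‖ ≤ 1 / ‖z‖ := by
          rw [norm_div]
          exact div_le_div_of_nonneg_right hw (by linarith) |>.trans le_rfl
        have h3 : 1 / ‖z‖ < 1 := by
          rw [div_lt_one (by linarith)]; exact hgt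
        simp only [Complex.sub_re, Complex.one_re]
        linarith
      exact (Complex.differentiableAt_log (Complex.mem_slitPlane_iff.2 (Or.inl hre))).comp w
        ((differentiableAt_const _).sub ((differentiableAt_id : DifferentiableAt ℂ id w).div_const z))
    have hmean := mean_value' f hd
    have hf0 : (f 0).re = 0 := by simp [hf]
    have hre : ∀ θ : ℝ, (f (Complex.exp (θ * Complex.I))).re
        = Real.log (‖z - Complex.exp (θ * Complex.I)‖) - Real.log (‖z‖) := by
      intro θ
      rw [hf]
      simp only
      rw [Complex.log_re]
      have h1 : (1 : ℂ) - Complex.exp (θ * Complex.I) / z = (z - Complex.exp (θ * Complex.I)) / z := by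
        field_simp
      rw [h1, norm_div, Real.log_div (habsne θ) (by simpa using hz0)]
    have hcont : Continuous fun θ : ℝ =>
        Real.log (‖z - Complex.exp (θ * Complex.I)‖) := by
      rw [continuous_iff_continuousAt]
      intro θ
      have hcabs : Continuous fun θ : ℝ => ‖z - Complex.exp (θ * Complex.I)‖ :=
        continuous_norm.comp (by continuity)
      show ContinuousAt (Real.log ∘ fun θ : ℝ => ‖z - Complex.exp (θ * Complex.I)‖) θ
      exact ContinuousAt.comp (g := Real.log)
        (f := fun θ : ℝ => ‖z - Complex.exp (θ * Complex.I)‖) (x := θ)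
        (Real.continuousAt_log (habsne θ)) hcabs.continuousAt
    have hint : IntervalIntegrable
        (fun θ : ℝ => Real.log (‖z - Complex.exp (θ * Complex.I)‖))
        volume 0 (2*π) := hcont.intervalIntegrable _ _
    have hsub : ∫ θ in (0:ℝ)..(2*π),
        (Real.log (‖z - Complex.exp (θ * Complex.I)‖) - Real.log (‖z‖))
        = 0 := by
      rw [← intervalIntegral.integral_congr (fun θ _ => hre θ), hmean, hf0, mul_zero]
    have hsplit := intervalIntegral.integral_sub hint
      (intervalIntegrable_const (c := Real.log (‖z‖)))
      (a := 0) (b := 2*π)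
    rw [hsub, intervalIntegral.integral_const, sub_zero, smul_eq_mul] at hsplit
    have hval : ∫ θ in (0:ℝ)..(2*π),
        Real.log (‖z - Complex.exp (θ * Complex.I)‖)
        = 2 * π * Real.log (‖z‖) := by linarith [hsplit]
    refine ⟨hint, ?_⟩
    rw [hval, if_pos (by linarith)]
    field_simp
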